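/- Let 𝔊 = (G = (V,E), Parity(ℙ), ψ_pers(Λ)) be a parity game augmented with persistent live groups, let P ∈ {0,1}, let S be a dominion for Player P in 𝔊, let X ⊆ V, and let A = attr^P_pers(G, X, Λ). Then S ∖ A is a dominion for Player P in the restricted augmented game 𝔊|_{V∖A} = (G|_{V∖A}, Parity(ℙ|_{V∖A}), ψ_pers(Λ|_{V∖A})). -/
import Mathlib


universe u

/-- A two-player game graph: finite-intended vertex set `V`, an ownership function
(`owner v = 0` means `v` is a Player-0 vertex, `owner v = 1` a Player-1 vertex),
and an edge relation such that every vertex has at least one outgoing edge. -/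
structure GameGraph (V : Type u) where
  owner : V → Fin 2
  E : V → V → Prop
  exists_succ : ∀ v, ∃ w, E v w

variable {V : Type u}

/-- A play of the game graph: an infinite sequence of vertices following edges. -/
def IsPlay (G : GameGraph V) (ρ : ℕ → V) : Prop :=
  ∀ k, G.E (ρ k) (ρ (k + 1))

/-- A (history-dependent) strategy: given the list of previously visited
vertices and the current vertex, it chooses a next vertex. -/
abbrev Strategy (V : Type u) := List V → V → V

/-- A strategy of Player `i` is valid if at each Player-`i` vertex it chooses
an edge of the game graph. -/
def StratValid (G : GameGraph V) (i : Fin 2) (σ : Strategy V) : Prop :=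
  ∀ (h : List V) (v : V), G.owner v = i → G.E v (σ h v)

/-- A positional (memoryless) strategy ignores the history. -/
def Positional (σ : Strategy V) : Prop :=
  ∀ (h h' : List V) (v : V), σ h v = σ h' v

/-- A play is compliant with the strategy `σ` of Player `i` (a `σ`-play) if at
every Player-`i` vertex it moves to the vertex chosen by `σ`. -/
def Compliant (G : GameGraph V) (i : Fin 2) (σ : Strategy V) (ρ : ℕ → V) : Prop :=
  ∀ k, G.owner (ρ k) = i → ρ (k + 1) = σ (List.ofFn fun j : Fin k => ρ j.val) (ρ k)

/-- `σ` is a winning strategy for Player `i` from `v`, where `W` is the set of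
plays that are winning for Player `i`. -/
def WinsFrom (G : GameGraph V) (i : Fin 2) (W : Set (ℕ → V)) (σ : Strategy V) (v : V) : Prop :=
  StratValid G i σ ∧
    ∀ ρ : ℕ → V, IsPlay G ρ → Compliant G i σ ρ → ρ 0 = v → ρ ∈ W

/-- The winning region of Player `i`: the vertices from which Player `i` has a
winning strategy. -/
def WinRegion (G : GameGraph V) (i : Fin 2) (W : Set (ℕ → V)) : Set V :=
  {v | ∃ σ, WinsFrom G i W σ v}

/-- A vertex occurs infinitely often along a play. -/
def InfOft (ρ : ℕ → V) (v : V) : Prop := ∀ n, ∃ k, n ≤ k ∧ ρ k = v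

/-- An edge is taken infinitely often along a play. -/
def EdgeInfOft (ρ : ℕ → V) (e : V × V) : Prop :=
  ∀ n, ∃ k, n ≤ k ∧ ρ k = e.1 ∧ ρ (k + 1) = e.2

/-- Parity objective: the maximal priority occurring infinitely often is even. -/
def ParityWin (P : V → ℕ) (ρ : ℕ → V) : Prop :=
  ∃ v, InfOft ρ v ∧ Even (P v) ∧ ∀ w, InfOft ρ w → P w ≤ P v

/-- The set of source vertices of a set of edges. -/
def srcSet (H : Set (V × V)) : Set V := {u | ∃ w, (u, w) ∈ H}

/-- A persistent live group: a triple `(S, C, R)` of a source region `S`, a set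
`C` of (Player-0-sourced) edges, and a target region `R ⊆ S`. -/
abbrev PersGroup (V : Type u) := Set V × Set (V × V) × Set V

/-- Well-formedness of a persistent live group `(S, C, R)` over `G`:
`R ⊆ S ⊆ V` and `C ⊆ E` consists of edges with Player-0 sources. -/
def persWF (G : GameGraph V) (g : PersGroup V) : Prop :=
  g.2.2 ⊆ g.1 ∧ ∀ e ∈ g.2.1, G.E e.1 e.2 ∧ G.owner e.1 = 0

/-- A play satisfies `ψ_pers(S, C, R)` iff for every position `n`: if from `n`
on the play stays in `S` and always takes an edge of `C` whenever it is at a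
source of `C`, then the play visits `R` at some position `≥ n`. -/
def psiPersOne (S : Set V) (C : Set (V × V)) (R : Set V) (ρ : ℕ → V) : Prop :=
  ∀ n : ℕ,
    (∀ m2, n ≤ m2 → ρ m2 ∈ S ∧ (ρ m2 ∈ srcSet C → (ρ m2, ρ (m2 + 1)) ∈ C)) →
      ∃ m2, n ≤ m2 ∧ ρ m2 ∈ R

/-- The assumption `ψ_pers(Λ)` induced by a set `Λ` of persistent live groups. -/
def psiPers (Λ : Set (PersGroup V)) (ρ : ℕ → V) : Prop :=
  ∀ g ∈ Λ, psiPersOne g.1 g.2.1 g.2.2 ρ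

/-- Restriction of a set of edges to a vertex set `U`. -/
def restrictC (C : Set (V × V)) (U : Set V) : Set (V × V) :=
  {e ∈ C | e.1 ∈ U ∧ e.2 ∈ U}

/-- Restriction `(S|_U, C|_U, R|_U)` of a persistent live group to `U`:
`R|_U = R ∩ U`, `C|_U = {(u,v) ∈ C : u, v ∈ U}` and
`S|_U = (S ∩ U) ∖ (src(C) ∖ src(C|_U))`. -/
def restrictGroup (U : Set V) (g : PersGroup V) : PersGroup V :=
  ((g.1 ∩ U) \ (srcSet g.2.1 \ srcSet (restrictC g.2.1 U)),
    restrictC g.2.1 U, g.2.2 ∩ U)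

/-- Restriction `Λ|_U` of a set of persistent live groups to `U`. -/
def restrictLam (U : Set V) (Λ : Set (PersGroup V)) : Set (PersGroup V) :=
  (restrictGroup U) '' Λ

/-- `D` is a dominion for Player `i` in the game restricted to the vertex set
`U` with winning plays `W`: Player `i` has a strategy (choosing, at each of
his/her vertices in `U`, an edge staying within `U`) such that every compliant
play within `U` that starts in `D` stays in `D` forever and is winning. -/
def DominionIn (G : GameGraph V) (U : Set V) (i : Fin 2) (W : Set (ℕ → V))
    (D : Set V) : Prop :=
  ∃ σ : Strategy V,
    (∀ (h : List V) (v : V), v ∈ U → G.owner v = i → G.E v (σ h v) ∧ σ h v ∈ U) ∧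
    ∀ ρ : ℕ → V, (∀ n, ρ n ∈ U) → IsPlay G ρ → Compliant G i σ ρ → ρ 0 ∈ D →
      (∀ n, ρ n ∈ D) ∧ ρ ∈ W

/-- The set of plays winning for Player `i` in an augmented game with
assumption `ψ` and objective `Φ`: Player 0 wins a play iff it violates `ψ` or
satisfies `Φ`, and Player 1 wins it otherwise. -/
def AugObj (i : Fin 2) (ψ Φ : (ℕ → V) → Prop) : Set (ℕ → V) :=
  if i = 0 then {ρ | ψ ρ → Φ ρ} else {ρ | ψ ρ ∧ ¬ Φ ρ}

/-- `attr⁰_pers(G, X, Λ)`: the winning region of Player 0 in the augmented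
reachability game `(G, ◇X, ψ_pers(Λ))`. -/
def attr0Pers (G : GameGraph V) (X : Set V) (Λ : Set (PersGroup V)) : Set V :=
  WinRegion G 0 {ρ | psiPers Λ ρ → ∃ n, ρ n ∈ X}

/-- `attr¹_pers(G, X, Λ)`: the Player-1 attractor of `X`, i.e. the set of
vertices from which Player 1 has a strategy forcing every compliant play to
visit `X`. -/
def attr1Pers (G : GameGraph V) (X : Set V) : Set V :=
  {v | ∃ σ : Strategy V, StratValid G 1 σ ∧
    ∀ ρ : ℕ → V, IsPlay G ρ → Compliant G 1 σ ρ → ρ 0 = v → ∃ n, ρ n ∈ X}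

/-- `attr^P_pers(G, X, Λ)` for a player `P ∈ {0,1}`. -/
def attrPers (G : GameGraph V) (Pl : Fin 2) (X : Set V) (Λ : Set (PersGroup V)) :
    Set V :=
  if Pl = 0 then attr0Pers G X Λ else attr1Pers G X

lemma psiPersOne_shift {S : Set V} {C : Set (V × V)} {R : Set V} {ρ : ℕ → V}
    (h : psiPersOne S C R ρ) : psiPersOne S C R (fun k => ρ (k + 1)) := by
  intro n hn
  obtain ⟨m, hm, hmR⟩ := h (n + 1) (fun m2 hm2 => by
    have h1 := hn (m2 - 1) (by omega)
    have e : m2 - 1 + 1 = m2 := by omega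
    simpa [e] using h1)
  refine ⟨m - 1, by omega, ?_⟩
  have e : m - 1 + 1 = m := by omega
  simpa [e] using hmR

lemma psiPers_shift {Λ : Set (PersGroup V)} {ρ : ℕ → V} (h : psiPers Λ ρ) :
    psiPers Λ (fun k => ρ (k + 1)) :=
  fun g hg => psiPersOne_shift (h g hg)

lemma psiPers_restrict {U : Set V} {Λ : Set (PersGroup V)} {ρ : ℕ → V}
    (hρ : ∀ n, ρ n ∈ U) :
    psiPers (restrictLam U Λ) ρ ↔ psiPers Λ ρ := by
  constructor
  · intro h g hg n hn
    have hg' := h (restrictGroup U g) ⟨g, hg, rfl⟩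
    obtain ⟨m, hm, hmR⟩ := hg' n (fun m2 hm2 => by
      obtain ⟨hS, hC⟩ := hn m2 hm2
      constructor
      · refine ⟨⟨hS, hρ m2⟩, ?_⟩
        rintro ⟨⟨w, hwC⟩, hnot⟩
        exact hnot ⟨ρ (m2 + 1), hC ⟨w, hwC⟩, hρ m2, hρ (m2 + 1)⟩
      · rintro ⟨w, hwC, -, -⟩
        exact ⟨hC ⟨w, hwC⟩, hρ m2, hρ (m2 + 1)⟩)
    exact ⟨m, hm, hmR.1⟩
  · rintro h g' ⟨g, hg, rfl⟩ n hn
    obtain ⟨m, hm, hmR⟩ := h g hg n (fun m2 hm2 => by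
      obtain ⟨hS, hC⟩ := hn m2 hm2
      constructor
      · exact hS.1.1
      · intro hsrc
        have hsrc' : ρ m2 ∈ srcSet (restrictC g.2.1 U) := by
          by_contra hno
          exact hS.2 ⟨hsrc, hno⟩
        exact (hC hsrc').1)
    exact ⟨m, hm, hmR, hρ m⟩

lemma compose_strategy (G : GameGraph V) (i : Fin 2) (σw : Strategy V)
    (hval : StratValid G i σw) (v w : V) (hown : G.owner v = i) (hE : G.E v w) :
    ∃ σ' : Strategy V, StratValid G i σ' ∧
      ∀ ρ : ℕ → V, IsPlay G ρ → Compliant G i σ' ρ → ρ 0 = v →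
        ρ 1 = w ∧ IsPlay G (fun k => ρ (k + 1)) ∧
          Compliant G i σw (fun k => ρ (k + 1)) := by
  classical
  refine ⟨fun h u => if h = [] then (if u = v then w else
      Classical.choose (G.exists_succ u)) else σw h.tail u, ?_, ?_⟩
  · intro h u hu
    by_cases hh : h = []
    · by_cases huv : u = v
      · simpa [hh, huv] using hE
      · simpa [hh, huv] using Classical.choose_spec (G.exists_succ u)
    · simpa [hh] using hval h.tail u hu
  · intro ρ hplay hcomp h0
    have h1 : ρ 1 = w := by
      have := hcomp 0 (by rw [h0]; exact hown)
      simpa [List.ofFn_zero, h0] using this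
    refine ⟨h1, fun k => hplay (k + 1), ?_⟩
    intro k hk
    have := hcomp (k + 1) hk
    have hlist : (List.ofFn fun j : Fin (k + 1) => ρ j.val) =
        ρ 0 :: List.ofFn fun j : Fin k => ρ (j.val + 1) := by
      rw [List.ofFn_succ]; rfl
    rw [hlist] at this
    simpa using this

lemma attr_step (G : GameGraph V) (Pl : Fin 2) (X : Set V) (Λ : Set (PersGroup V))
    (v w : V) (hown : G.owner v = Pl) (hE : G.E v w)
    (hw : w ∈ attrPers G Pl X Λ) : v ∈ attrPers G Pl X Λ := by
  fin_cases Pl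
  · simp only [attrPers, if_pos rfl] at hw ⊢
    obtain ⟨σw, hval, hwin⟩ := hw
    obtain ⟨σ', hval', hprop⟩ := compose_strategy G 0 σw hval v w hown hE
    refine ⟨σ', hval', ?_⟩
    intro ρ hplay hcomp h0 hψ
    obtain ⟨h1, hplay', hcomp'⟩ := hprop ρ hplay hcomp h0
    obtain ⟨n, hn⟩ := hwin _ hplay' hcomp' h1 (psiPers_shift hψ)
    exact ⟨n + 1, hn⟩
  · simp only [attrPers, if_neg (by decide : (1 : Fin 2) ≠ 0)] at hw ⊢
    obtain ⟨σw, hval, hwin⟩ := hw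
    obtain ⟨σ', hval', hprop⟩ := compose_strategy G 1 σw hval v w hown hE
    refine ⟨σ', hval', ?_⟩
    intro ρ hplay hcomp h0
    obtain ⟨h1, hplay', hcomp'⟩ := hprop ρ hplay hcomp h0
    obtain ⟨n, hn⟩ := hwin _ hplay' hcomp' h1
    exact ⟨n + 1, hn⟩

/-- Let `𝔊 = (G, Parity(ℙ), ψ_pers(Λ))`, let `P ∈ {0,1}`, let `S`
be a dominion for Player `P` in `𝔊`, let `X ⊆ V`, and let
`A = attr^P_pers(G, X, Λ)`.  Then `S ∖ A` is a dominion for Player `P` in the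
restricted augmented game `𝔊|_{V∖A}`. -/
theorem stmt12 (V : Type) [Fintype V] (G : GameGraph V)
    (d : ℕ) (P : V → ℕ) (hP : ∀ v, P v ≤ d)
    (Λ : Set (PersGroup V)) (hΛ : ∀ g ∈ Λ, persWF G g)
    (Pl : Fin 2) (S X : Set V)
    (hS : DominionIn G Set.univ Pl (AugObj Pl (psiPers Λ) (ParityWin P)) S) :
    DominionIn G (attrPers G Pl X Λ)ᶜ Pl
      (AugObj Pl (psiPers (restrictLam (attrPers G Pl X Λ)ᶜ Λ)) (ParityWin P))
      (S \ attrPers G Pl X Λ) := by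
  obtain ⟨σ, hσ1, hσ2⟩ := hS
  refine ⟨σ, ?_, ?_⟩
  · intro h v hv hvPl
    obtain ⟨hE, -⟩ := hσ1 h v trivial hvPl
    refine ⟨hE, ?_⟩
    intro hmem
    exact hv (attr_step G Pl X Λ v _ hvPl hE hmem)
  · intro ρ hρU hplay hcomp h0
    obtain ⟨hinS, hwin⟩ := hσ2 ρ (fun n => trivial) hplay hcomp h0.1
    refine ⟨fun n => ⟨hinS n, hρU n⟩, ?_⟩
    fin_cases Pl
    · simp only [AugObj, if_pos rfl, Set.mem_setOf_eq] at hwin ⊢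
      intro hψ'
      exact hwin ((psiPers_restrict hρU).mp hψ')
    · simp only [AugObj, if_neg (by decide : (1 : Fin 2) ≠ 0),
        Set.mem_setOf_eq] at hwin ⊢
      exact ⟨(psiPers_restrict hρU).mpr hwin.1, hwin.2⟩
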